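/- For every a ∈ ℝ, sup_{x∈ℝ} |Φ(x + a) − Φ(x)| = 2Φ(|a|/2) − 1 ≤ |a|/√(2π). -/

import Mathlib

open MeasureTheory ProbabilityTheory Real

/-- The standard normal distribution function Φ. -/
noncomputable def stdNormalCDF (x : ℝ) : ℝ :=
  (Real.sqrt (2 * Real.pi))⁻¹ * ∫ z in Set.Iic x, Real.exp (-z ^ 2 / 2)

/-!
Write `φ z = exp (-z ^ 2 / 2)`, so that `Φ (x + a) - Φ x` is `(2π)^{-1/2} ∫_x^{x+a} φ`.
Since `φ` is even and decreasing in `|z|`, moving a window `[x, x + a]` of fixed length towards the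
centred window `[-a/2, a/2]` trades mass at points of larger modulus for mass at points of smaller
modulus, so the centred window carries the most mass: for `a ≥ 0` the supremum is attained at
`x = -a/2` and equals `Φ (a/2) - Φ (-a/2) = 2Φ (a/2) - 1`, and for `a < 0` the same holds for the
window `[x + a, x]`. Bounding `φ ≤ 1` on the centred window gives the inequality.
-/

open Set intervalIntegral

section AbsAntitone

variable {f : ℝ → ℝ}

lemma intervalIntegrable_of_abs_le_imp_le (hf : ∀ u v, |u| ≤ |v| → f v ≤ f u) (x y : ℝ) :
    IntervalIntegrable f volume x y := by
  suffices h : ∀ x, IntervalIntegrable f volume 0 x from (h x).symm.trans (h y)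
  intro x
  rcases le_total 0 x with hx | hx
  · refine AntitoneOn.intervalIntegrable fun s hs t ht hst => hf s t ?_
    rw [uIcc_of_le hx] at hs ht
    rwa [abs_of_nonneg hs.1, abs_of_nonneg ht.1]
  · refine MonotoneOn.intervalIntegrable fun s hs t ht hst => hf t s ?_
    rw [uIcc_of_ge hx] at hs ht
    rw [abs_of_nonpos hs.2, abs_of_nonpos ht.2]
    linarith

lemma integral_add_le_integral_centered (hf : ∀ u v, |u| ≤ |v| → f v ≤ f u) {a : ℝ}
    (ha : 0 ≤ a) (x : ℝ) : ∫ t in x..x + a, f t ≤ ∫ t in -(a / 2)..a / 2, f t := by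
  have hint := intervalIntegrable_of_abs_le_imp_le hf
  have hint_add (u v : ℝ) : IntervalIntegrable (fun s => f (s + a)) volume u v := by
    simpa using (hint (u + a) (v + a)).comp_add_right a
  have hdiff : (∫ t in x..x + a, f t) - ∫ t in -(a / 2)..a / 2, f t
      = (∫ s in x..-(a / 2), f s) - ∫ s in x..-(a / 2), f (s + a) := by
    rw [integral_interval_sub_interval_comm (hint _ _) (hint _ _) (hint _ _),
      integral_comp_add_right f a, show -(a / 2) + a = a / 2 by ring]
  rw [← sub_nonpos, hdiff, sub_nonpos]
  -- `|s + a| ≤ |s|` exactly when `s ≤ -(a / 2)`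
  rcases le_total x (-(a / 2)) with hx | hx
  · refine integral_mono_on hx (hint _ _) (hint_add _ _) fun s hs => hf _ _ ?_
    rw [← abs_neg s]
    exact abs_le_abs (by linarith [hs.2]) (by linarith)
  · rw [integral_symm, integral_symm _ x, neg_le_neg_iff]
    refine integral_mono_on hx (hint_add _ _) (hint _ _) fun s hs => hf _ _ ?_
    exact abs_le_abs (by linarith) (by linarith [hs.1])

end AbsAntitone

lemma exp_neg_sq_div_two_eq (z : ℝ) : exp (-z ^ 2 / 2) = exp (-(1 / 2) * z ^ 2) := by
  ring_nf

lemma integrable_exp_neg_sq_div_two : Integrable fun z : ℝ => exp (-z ^ 2 / 2) := by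
  simpa only [exp_neg_sq_div_two_eq] using integrable_exp_neg_mul_sq (b := 1 / 2) (by norm_num)

lemma integral_exp_neg_sq_div_two : ∫ z, exp (-z ^ 2 / 2) = √(2 * π) := by
  simp only [exp_neg_sq_div_two_eq, integral_gaussian]
  congr 1
  ring

lemma exp_neg_sq_div_two_le_of_abs_le {u v : ℝ} (h : |u| ≤ |v|) :
    exp (-v ^ 2 / 2) ≤ exp (-u ^ 2 / 2) := by
  have := sq_le_sq.2 h
  gcongr

lemma stdNormalCDF_sub_stdNormalCDF (x y : ℝ) :
    stdNormalCDF y - stdNormalCDF x = (√(2 * π))⁻¹ * ∫ z in x..y, exp (-z ^ 2 / 2) := by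
  rw [stdNormalCDF, stdNormalCDF, ← mul_sub, integral_Iic_sub_Iic
    integrable_exp_neg_sq_div_two.integrableOn integrable_exp_neg_sq_div_two.integrableOn]

lemma stdNormalCDF_neg (x : ℝ) : stdNormalCDF (-x) = 1 - stdNormalCDF x := by
  have hneg : ∫ z in Iic (-x), exp (-z ^ 2 / 2) = ∫ z in Ioi x, exp (-z ^ 2 / 2) := by
    have h := integral_comp_neg_Iic (-x) fun z => exp (-z ^ 2 / 2)
    simp only [neg_neg] at h
    simpa only [even_two.neg_pow] using h
  have htotal :
      (∫ z in Iic x, exp (-z ^ 2 / 2)) + ∫ z in Ioi x, exp (-z ^ 2 / 2) = √(2 * π) := by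
    rw [integral_Iic_add_Ioi integrable_exp_neg_sq_div_two.integrableOn
      integrable_exp_neg_sq_div_two.integrableOn, integral_exp_neg_sq_div_two]
  rw [stdNormalCDF, stdNormalCDF, hneg, ← sub_eq_of_eq_add' htotal.symm]
  field_simp

lemma stdNormalCDF_monotone : Monotone stdNormalCDF := fun x y hxy => by
  rw [← sub_nonneg, stdNormalCDF_sub_stdNormalCDF]
  exact mul_nonneg (by positivity) (integral_nonneg hxy fun z _ => (exp_pos _).le)

lemma stdNormalCDF_add_sub_le {a : ℝ} (ha : 0 ≤ a) (x : ℝ) :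
    stdNormalCDF (x + a) - stdNormalCDF x ≤ stdNormalCDF (a / 2) - stdNormalCDF (-(a / 2)) := by
  rw [stdNormalCDF_sub_stdNormalCDF, stdNormalCDF_sub_stdNormalCDF]
  gcongr
  exact integral_add_le_integral_centered (fun _ _ => exp_neg_sq_div_two_le_of_abs_le) ha x

lemma abs_stdNormalCDF_sub_stdNormalCDF_neg (y : ℝ) :
    |stdNormalCDF y - stdNormalCDF (-y)| = 2 * stdNormalCDF |y| - 1 := by
  have hsymm : |stdNormalCDF y - stdNormalCDF (-y)| = stdNormalCDF |y| - stdNormalCDF (-|y|) := by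
    rcases abs_choice y with h | h <;> rw [h]
    · exact abs_of_nonneg (sub_nonneg.2 (stdNormalCDF_monotone (by linarith [abs_nonneg y])))
    · rw [neg_neg, abs_sub_comm]
      exact abs_of_nonneg (sub_nonneg.2 (stdNormalCDF_monotone (by linarith [abs_nonneg y])))
  rw [hsymm, stdNormalCDF_neg]
  ring

lemma abs_stdNormalCDF_add_sub_le (a x : ℝ) :
    |stdNormalCDF (x + a) - stdNormalCDF x| ≤ 2 * stdNormalCDF (|a| / 2) - 1 := by
  have hcentre : stdNormalCDF (|a| / 2) - stdNormalCDF (-(|a| / 2))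
      = 2 * stdNormalCDF (|a| / 2) - 1 := by
    rw [stdNormalCDF_neg]
    ring
  rw [← hcentre]
  rcases le_total 0 a with ha | ha
  · rw [abs_of_nonneg (sub_nonneg.2 (stdNormalCDF_monotone (by linarith))), abs_of_nonneg ha]
    exact stdNormalCDF_add_sub_le ha x
  · have h := stdNormalCDF_add_sub_le (neg_nonneg.2 ha) (x + a)
    rw [add_neg_cancel_right] at h
    rwa [abs_sub_comm, abs_of_nonneg (sub_nonneg.2 (stdNormalCDF_monotone (by linarith))),
      abs_of_nonpos ha]

lemma two_mul_stdNormalCDF_sub_one_le (c : ℝ) :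
    2 * stdNormalCDF c - 1 ≤ 2 * |c| / √(2 * π) := by
  have hwindow : |∫ z in -c..c, exp (-z ^ 2 / 2)| ≤ 1 * |c - -c| :=
    intervalIntegral.norm_integral_le_of_norm_le_const (f := fun z => exp (-z ^ 2 / 2))
      fun z _ => by
        rw [Real.norm_eq_abs, abs_of_pos (exp_pos _), exp_le_one_iff]
        linarith [sq_nonneg z]
  have hc : |c - -c| = 2 * |c| := by rw [sub_neg_eq_add, ← two_mul, abs_mul, abs_two]
  calc 2 * stdNormalCDF c - 1 = (√(2 * π))⁻¹ * ∫ z in -c..c, exp (-z ^ 2 / 2) := by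
        rw [← stdNormalCDF_sub_stdNormalCDF, stdNormalCDF_neg]
        ring
    _ ≤ (√(2 * π))⁻¹ * (2 * |c|) := by
        gcongr
        exact (le_abs_self _).trans (by rwa [one_mul, hc] at hwindow)
    _ = 2 * |c| / √(2 * π) := by ring

/-- for every `a ∈ ℝ`,
`sup_x |Φ(x + a) − Φ(x)| = 2Φ(|a|/2) − 1 ≤ |a|/√(2π)`. -/
theorem sup_abs_stdNormalCDF_shift (a : ℝ) :
    (⨆ x : ℝ, |stdNormalCDF (x + a) - stdNormalCDF x|) = 2 * stdNormalCDF (|a| / 2) - 1 ∧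
    2 * stdNormalCDF (|a| / 2) - 1 ≤ |a| / Real.sqrt (2 * Real.pi) := by
  have hbdd : BddAbove (range fun x => |stdNormalCDF (x + a) - stdNormalCDF x|) :=
    ⟨_, forall_mem_range.2 (abs_stdNormalCDF_add_sub_le a)⟩
  have hattained : |stdNormalCDF (-(a / 2) + a) - stdNormalCDF (-(a / 2))|
      = 2 * stdNormalCDF (|a| / 2) - 1 := by
    rw [show -(a / 2) + a = a / 2 by ring, abs_stdNormalCDF_sub_stdNormalCDF_neg, abs_div, abs_two]
  refine ⟨le_antisymm (ciSup_le (abs_stdNormalCDF_add_sub_le a))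
    (le_ciSup_of_le hbdd _ hattained.ge), ?_⟩
  have h := two_mul_stdNormalCDF_sub_one_le (|a| / 2)
  rwa [abs_of_nonneg (show 0 ≤ |a| / 2 by positivity), mul_div_cancel₀ _ two_ne_zero] at h
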